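/- arXiv:1309.2865 — 3 statements merged into one kernel-verified Lean document; each statement's English description precedes it below -/
import Mathlib

section
/- Fix N ∈ ℕ, h = 1/N, and define the backward recursion Y_{i} = Y_{i+1}(1 - h·Y_{i+1}²) for i = N-1, ..., 0 (a deterministic explicit Euler step for the driver f(y) = -y³). If |Y_N| ≥ 2√N, then for every i ∈ {0, ..., N}, |Y_i| ≥ 2^{2^{N-i}} · √N. -/
/-!
On the scale `s` with `h * s ^ 2 = 1`, write `|y| = M * s`. One explicit Euler step backward
multiplies `|y|` by `h * y ^ 2 - 1 = M ^ 2 - 1`, and `M ^ 2 - 1 ≥ M` as soon as `M ≥ 2`, so a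
lower bound `M * s` turns into `M ^ 2 * s`. Starting from `M = 2` at the terminal time, after
`k` backward steps the bound is `2 ^ (2 ^ k) * s`.
-/

theorem sq_mul_le_abs_euler_step {h s M y : ℝ} (hs : 0 ≤ s) (hhs : h * s ^ 2 = 1) (hM : 2 ≤ M)
    (hy : M * s ≤ |y|) : M ^ 2 * s ≤ |y * (1 - h * y ^ 2)| := by
  have hh : 0 < h := pos_of_mul_pos_left (hhs ▸ one_pos) (sq_nonneg s)
  have hhy : M ^ 2 ≤ h * |y| ^ 2 := by
    calc M ^ 2 = h * (M * s) ^ 2 := by linear_combination -M ^ 2 * hhs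
      _ ≤ h * |y| ^ 2 := by gcongr
  have hfactor : |1 - h * y ^ 2| = h * |y| ^ 2 - 1 := by
    rw [← sq_abs y, abs_of_nonpos (by nlinarith)]
    ring
  have hgrowth : M ≤ M ^ 2 - 1 := by nlinarith
  calc M ^ 2 * s = M * s * M := by ring
    _ ≤ M * s * (M ^ 2 - 1) := by gcongr
    _ ≤ |y| * (h * |y| ^ 2 - 1) := by gcongr; linarith
    _ = |y * (1 - h * y ^ 2)| := by rw [abs_mul, hfactor]

theorem two_pow_two_pow_mul_le_abs_of_backward_euler {N : ℕ} {h s : ℝ} {Y : ℕ → ℝ}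
    (hs : 0 ≤ s) (hhs : h * s ^ 2 = 1)
    (hrec : ∀ i < N, Y i = Y (i + 1) * (1 - h * Y (i + 1) ^ 2)) (hterm : 2 * s ≤ |Y N|) :
    ∀ i ≤ N, (2 : ℝ) ^ 2 ^ (N - i) * s ≤ |Y i| := by
  intro i hi
  induction hi using Nat.decreasingInduction with
  | self => simpa using hterm
  | of_succ k hk ih =>
    have hexp : N - k = N - (k + 1) + 1 := by omega
    have hM : (2 : ℝ) ≤ 2 ^ 2 ^ (N - (k + 1)) :=
      le_self_pow₀ one_le_two (Nat.two_pow_pos _).ne'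
    rw [hrec k hk, hexp, pow_succ, pow_mul]
    exact sq_mul_le_abs_euler_step hs hhs hM ih

theorem explicit_euler_blowup (N : ℕ) (hN : 0 < N) (Y : ℕ → ℝ)
    (hrec : ∀ i < N, Y i = Y (i+1) * (1 - (1/(N:ℝ)) * (Y (i+1))^2))
    (hterm : 2 * Real.sqrt N ≤ |Y N|) :
    ∀ i ≤ N, (2:ℝ)^(2^(N-i)) * Real.sqrt N ≤ |Y i| := by
  have hscale : 1 / (N : ℝ) * Real.sqrt N ^ 2 = 1 := by
    rw [Real.sq_sqrt N.cast_nonneg]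
    field_simp
  exact two_pow_two_pow_mul_le_abs_of_backward_euler (Real.sqrt_nonneg _) hscale hrec hterm
end

section
/- Let N be even, ξ = W_{1/2} where W is a standard Brownian motion, and define Y_N^{(N)} = ξ and Y_i^{(N)} = ψ^{∘(N-i)}(ξ) for i ≥ N/2, where ψ(x) = x - (1/N)x³. Then E[|Y_{N/2}^{(N)}|] ≥ 2^{2^{N/2}} · √N · P(|W_{1/2}| ≥ 2√N), and consequently E[|Y_{N/2}^{(N)}|] → +∞ as N → ∞. -/
/-!
Once `|x| ≥ a √N` with `a ≥ 2`, one step of `ψ x = x - x³ / N` gives `|ψ x| ≥ a² √N`, so on the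
event `|ξ| ≥ 2 √N` the iterates grow doubly exponentially: `|ψ^[k] ξ| ≥ 2^(2^k) √N`.
For `ξ ~ 𝒩(0, 1/2)` and `N = 2M` that event has probability at least of order `√M e^(-32M)`,
which only decays exponentially, so `2^(2^M) √(2M)` times it still tends to infinity.
-/

open MeasureTheory ProbabilityTheory Filter Real
open scoped NNReal ENNReal

/-- The explicit Euler step for `x' = -x³` with step size `1 / N`. -/
noncomputable def cubicEulerStep (N : ℝ) (x : ℝ) : ℝ := x - 1 / N * x ^ 3

theorem mul_sqrt_le_abs_cubicEulerStep {N a y : ℝ} (hN : 0 < N) (ha : 2 ≤ a)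
    (hy : a * √N ≤ |y|) : a ^ 2 * √N ≤ |cubicEulerStep N y| := by
  have hsqrt : 0 < √N := sqrt_pos.mpr hN
  have hy2 : a ^ 2 ≤ y ^ 2 / N := by
    rw [le_div_iff₀ hN, ← sq_abs y, ← sq_sqrt hN.le, ← mul_pow]
    exact pow_le_pow_left₀ (by positivity) hy 2
  have hfactor : cubicEulerStep N y = -(y * (y ^ 2 / N - 1)) := by
    unfold cubicEulerStep; ring
  rw [hfactor, abs_neg, abs_mul, abs_of_nonneg (a := y ^ 2 / N - 1) (by nlinarith)]
  have hcubic : a ^ 2 ≤ a * (a ^ 2 - 1) := by nlinarith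
  calc a ^ 2 * √N ≤ a * (a ^ 2 - 1) * √N := by gcongr
    _ = a * √N * (a ^ 2 - 1) := by ring
    _ ≤ |y| * (y ^ 2 / N - 1) := by gcongr; nlinarith

theorem two_pow_two_pow_mul_sqrt_le_abs_iterate_cubicEulerStep {N x : ℝ} (hN : 0 < N)
    (hx : 2 * √N ≤ |x|) (k : ℕ) : 2 ^ 2 ^ k * √N ≤ |(cubicEulerStep N)^[k] x| := by
  induction k with
  | zero => simpa using hx
  | succ k ih =>
    rw [Function.iterate_succ_apply', pow_succ, pow_mul]
    exact mul_sqrt_le_abs_cubicEulerStep hN (le_self_pow₀ one_le_two (by positivity)) ih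

theorem mul_measure_le_lintegral_abs_iterate_cubicEulerStep {Ω : Type*} [MeasurableSpace Ω]
    (P : Measure Ω) {ξ : Ω → ℝ} (hξ : Measurable ξ) {N : ℝ} (hN : 0 < N) (k : ℕ) :
    ENNReal.ofReal (2 ^ 2 ^ k * √N) * P {ω | 2 * √N ≤ |ξ ω|}
      ≤ ∫⁻ ω, ENNReal.ofReal |(cubicEulerStep N)^[k] (ξ ω)| ∂P := by
  have hs : MeasurableSet {ω | 2 * √N ≤ |ξ ω|} := measurableSet_le measurable_const hξ.abs
  calc _ = ∫⁻ _ in {ω | 2 * √N ≤ |ξ ω|}, ENNReal.ofReal (2 ^ 2 ^ k * √N) ∂P :=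
        (setLIntegral_const _ _).symm
    _ ≤ ∫⁻ ω in {ω | 2 * √N ≤ |ξ ω|}, ENNReal.ofReal |(cubicEulerStep N)^[k] (ξ ω)| ∂P :=
        setLIntegral_mono' hs fun ω hω => ENNReal.ofReal_le_ofReal
          (two_pow_two_pow_mul_sqrt_le_abs_iterate_cubicEulerStep hN hω k)
    _ ≤ _ := setLIntegral_le_lintegral _ _

/-- The centred Gaussian density is decreasing in `|y|`, so it is at least its value at `2x` on
`[x, 2x]`. -/
theorem ofReal_mul_gaussianPDFReal_le_gaussianReal {v : ℝ≥0} (hv : v ≠ 0) {x : ℝ} (hx : 0 ≤ x) :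
    ENNReal.ofReal (x * gaussianPDFReal 0 v (2 * x)) ≤ gaussianReal 0 v {y | x ≤ |y|} := by
  have hsub : Set.Icc x (2 * x) ⊆ {y | x ≤ |y|} := fun y hy => hy.1.trans (le_abs_self y)
  rw [gaussianReal_apply 0 hv]
  calc ENNReal.ofReal (x * gaussianPDFReal 0 v (2 * x))
      = ∫⁻ _ in Set.Icc x (2 * x), ENNReal.ofReal (gaussianPDFReal 0 v (2 * x)) := by
        rw [setLIntegral_const, Real.volume_Icc, ← ENNReal.ofReal_mul (gaussianPDFReal_nonneg _ _ _)]
        congr 1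
        ring
    _ ≤ ∫⁻ y in Set.Icc x (2 * x), gaussianPDF 0 v y := by
        refine setLIntegral_mono' measurableSet_Icc fun y hy => ENNReal.ofReal_le_ofReal ?_
        have hy0 : 0 ≤ y := hx.trans hy.1
        simp only [gaussianPDFReal, sub_zero]
        gcongr
        exact hy.2
    _ ≤ ∫⁻ y in {y | x ≤ |y|}, gaussianPDF 0 v y := lintegral_mono_set hsub

theorem sixtyFour_mul_le_two_pow {n : ℕ} (hn : 10 ≤ n) : 64 * n ≤ 2 ^ n := by
  induction n, hn using Nat.le_induction with
  | base => norm_num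
  | succ n hn ih =>
    have : 64 ≤ 2 ^ n := le_trans (by norm_num) (Nat.pow_le_pow_right two_pos hn)
    rw [pow_succ]
    omega

theorem exp_le_two_pow_two_pow {n : ℕ} (hn : 10 ≤ n) : exp (32 * n) ≤ (2 : ℝ) ^ 2 ^ n :=
  calc exp (32 * n) = exp 1 ^ (32 * n) := by rw [← exp_nat_mul]; push_cast; ring_nf
    _ ≤ 4 ^ (32 * n) := by gcongr; linarith [exp_one_lt_d9]
    _ = 2 ^ (64 * n) := by rw [pow_mul 2 64]; norm_num [pow_mul]
    _ ≤ 2 ^ 2 ^ n := pow_le_pow_right₀ one_le_two (sixtyFour_mul_le_two_pow hn)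

theorem natCast_le_two_pow_two_pow_mul_gaussianTail {M : ℕ} (hM : 10 ≤ M) :
    (M : ℝ) ≤ 2 ^ 2 ^ M * √(2 * M)
      * (2 * √(2 * M) * gaussianPDFReal 0 (1 / 2) (2 * (2 * √(2 * M)))) := by
  have hsqrt : √(2 * M) * √(2 * M) = 2 * M := mul_self_sqrt (by positivity)
  have hpdf : gaussianPDFReal 0 (1 / 2) (2 * (2 * √(2 * M))) = exp (-(32 * M)) / √π := by
    have hnorm : 2 * π * ((1 / 2 : ℝ≥0) : ℝ) = π := by push_cast; ring
    have hexponent : -(2 * (2 * √(2 * M)) - 0) ^ 2 / (2 * ((1 / 2 : ℝ≥0) : ℝ)) = -(32 * M) := by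
      push_cast
      linear_combination (-16) * hsqrt
    rw [gaussianPDFReal, hnorm, hexponent, div_eq_inv_mul]
  have hgrowth : 1 ≤ 2 ^ 2 ^ M * exp (-(32 * M)) := by
    rw [exp_neg, ← div_eq_mul_inv, one_le_div (exp_pos _)]
    exact exp_le_two_pow_two_pow hM
  have hpi : √π ≤ 4 := sqrt_le_iff.mpr ⟨by norm_num, by linarith [pi_le_four]⟩
  calc (M : ℝ) ≤ 4 * M * (2 ^ 2 ^ M * exp (-(32 * M))) / √π := by
        rw [le_div_iff₀ (sqrt_pos.mpr pi_pos)]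
        nlinarith [sqrt_nonneg π]
    _ = _ := by
        rw [hpdf]
        linear_combination (-2 * 2 ^ 2 ^ M * exp (-(32 * M)) / √π) * hsqrt

theorem euler_scheme_diverges_general {Ω : Type*} [MeasurableSpace Ω]
    (P : Measure Ω)
    (ξ : Ω → ℝ) (hξ : Measurable ξ) (hlaw : P.map ξ = gaussianReal 0 (1/2)) :
    (∀ M : ℕ, 0 < M →
      ENNReal.ofReal ((2:ℝ)^(2^M) * Real.sqrt (2*M)) * P {ω | 2 * Real.sqrt (2*M) ≤ |ξ ω|}
        ≤ ∫⁻ ω, ENNReal.ofReal |(fun x : ℝ => x - (1/(2*(M:ℝ))) * x^3)^[M] (ξ ω)| ∂P)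
    ∧ Tendsto
        (fun M : ℕ => ∫⁻ ω, ENNReal.ofReal |(fun x : ℝ => x - (1/(2*(M:ℝ))) * x^3)^[M] (ξ ω)| ∂P)
        atTop (nhds ⊤) := by
  have lower (M : ℕ) (hM : 0 < M) := mul_measure_le_lintegral_abs_iterate_cubicEulerStep P hξ
    (N := 2 * M) (by positivity) M
  refine ⟨lower, tendsto_nhds_top_mono
    (ENNReal.tendsto_ofReal_atTop.comp tendsto_natCast_atTop_atTop) ?_⟩
  filter_upwards [eventually_ge_atTop 10] with M hM
  have tail : ENNReal.ofReal (2 * √(2 * M) * gaussianPDFReal 0 (1 / 2) (2 * (2 * √(2 * M))))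
      ≤ P {ω | 2 * √(2 * M) ≤ |ξ ω|} := by
    calc _ ≤ gaussianReal 0 (1 / 2) {y | 2 * √(2 * M) ≤ |y|} :=
          ofReal_mul_gaussianPDFReal_le_gaussianReal (by norm_num) (by positivity)
      _ = P (ξ ⁻¹' {y | 2 * √(2 * M) ≤ |y|}) := by
          rw [← hlaw, Measure.map_apply hξ (measurableSet_le measurable_const measurable_abs)]
  calc ENNReal.ofReal M
      ≤ ENNReal.ofReal (2 ^ 2 ^ M * √(2 * M))
        * ENNReal.ofReal (2 * √(2 * M) * gaussianPDFReal 0 (1 / 2) (2 * (2 * √(2 * M)))) := by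
        rw [← ENNReal.ofReal_mul (by positivity)]
        exact ENNReal.ofReal_le_ofReal (natCast_le_two_pow_two_pow_mul_gaussianTail hM)
    _ ≤ _ := by gcongr
    _ ≤ _ := lower M (by omega)

theorem euler_scheme_diverges {Ω : Type*} [MeasurableSpace Ω]
    (P : Measure Ω) [IsProbabilityMeasure P]
    (ξ : Ω → ℝ) (hξ : Measurable ξ) (hlaw : P.map ξ = gaussianReal 0 (1/2)) :
    (∀ M : ℕ, 0 < M →
      ENNReal.ofReal ((2:ℝ)^(2^M) * Real.sqrt (2*M)) * P {ω | 2 * Real.sqrt (2*M) ≤ |ξ ω|}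
        ≤ ∫⁻ ω, ENNReal.ofReal |(fun x : ℝ => x - (1/(2*(M:ℝ))) * x^3)^[M] (ξ ω)| ∂P)
    ∧ Tendsto
        (fun M : ℕ => ∫⁻ ω, ENNReal.ofReal |(fun x : ℝ => x - (1/(2*(M:ℝ))) * x^3)^[M] (ξ ω)| ∂P)
        atTop (nhds ⊤) :=
  euler_scheme_diverges_general P ξ hξ hlaw
end

section
/- Suppose for a family of random variables (or reals) one has the one-step stability bound: A_i + ρ B_i h ≤ (1+ch)(A_{i+1} + (ρ/4) B_{i+1} h) + H_i for i = 0,…,N-1, where A_i, B_i, H_i ≥ 0, ρ, c, h > 0. Then max_{0≤i≤N} A_i + (3ρ/4) Σ_{i=0}^{N-1} B_i h ≤ C ( A_N + (ρ/4) B_N h + Σ_{i=0}^{N-1} H_i e^{c i h} ) for a constant C depending only on ρ, c, and Nh = T. -/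
/-!
With `I i := A i + (ρ/4) B i h`, the gap between `ρ` and `ρ/4` leaves room for the quantity
`U i := I i + (3ρ/4) ∑_{i ≤ j < N} B j h` to satisfy the same recursion
`U i ≤ (1 + c h) U (i+1) + H i` as `I` would. The discrete Gronwall lemma, applied to the weighted
sequence `(1 + c h)^i U i`, bounds every `U i` by `e^{cT} (I N + ∑ H j e^{c j h})`, and the
claim follows from `A i ≤ U i` and `(3ρ/4) ∑ B j h ≤ U 0`.
-/

open Finset

theorem le_add_sum_Ico_of_le_succ_add {R : Type*} [AddCommGroup R] [PartialOrder R]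
    [IsOrderedAddMonoid R] {v w : ℕ → R} {m N : ℕ} (hmN : m ≤ N)
    (hv : ∀ j ∈ Ico m N, v j ≤ v (j + 1) + w j) :
    v m ≤ v N + ∑ j ∈ Ico m N, w j := by
  rw [← sub_le_iff_le_add', ← neg_sub, ← sum_Ico_sub v hmN, ← sum_neg_distrib]
  exact sum_le_sum fun j hj => by rw [neg_sub, sub_le_iff_le_add']; exact hv j hj

theorem pow_mul_le_pow_mul_add_sum_of_le_mul_succ_add {R : Type*} [CommRing R] [PartialOrder R]
    [IsOrderedRing R] {a : R} (ha : 0 ≤ a) {u g : ℕ → R} {m N : ℕ} (hmN : m ≤ N)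
    (hu : ∀ j < N, u j ≤ a * u (j + 1) + g j) :
    a ^ m * u m ≤ a ^ N * u N + ∑ j ∈ Ico m N, a ^ j * g j := by
  refine le_add_sum_Ico_of_le_succ_add (v := fun j => a ^ j * u j) hmN fun j hj => ?_
  calc a ^ j * u j ≤ a ^ j * (a * u (j + 1) + g j) :=
        mul_le_mul_of_nonneg_left (hu j (mem_Ico.mp hj).2) (pow_nonneg ha j)
    _ = a ^ (j + 1) * u (j + 1) + a ^ j * g j := by ring

theorem one_add_mul_pow_le_exp_mul_mul {x y : ℝ} (hxy : 0 ≤ x * y) (n : ℕ) :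
    (1 + x * y) ^ n ≤ Real.exp (x * n * y) := by
  rw [mul_right_comm, mul_comm _ (n : ℝ), Real.exp_nat_mul]
  exact pow_le_pow_left₀ (by linarith) (by linarith [Real.add_one_le_exp (x * y)]) n

/-- The paper's `I i`. -/
noncomputable def energy (ρ h : ℝ) (A B : ℕ → ℝ) (i : ℕ) : ℝ :=
  A i + ρ / 4 * B i * h

noncomputable def energyDissipation (ρ h : ℝ) (N : ℕ) (A B : ℕ → ℝ) (i : ℕ) : ℝ :=
  energy ρ h A B i + 3 * ρ / 4 * ∑ j ∈ Ico i N, B j * h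

section Aggregation

variable {ρ c h : ℝ} {N : ℕ} {A B H : ℕ → ℝ}

theorem energy_nonneg (hρ : 0 ≤ ρ) (hh : 0 ≤ h) {i : ℕ} (hA : 0 ≤ A i) (hB : 0 ≤ B i) :
    0 ≤ energy ρ h A B i := by
  unfold energy; positivity

theorem energy_le_energyDissipation (hρ : 0 ≤ ρ) (hh : 0 ≤ h) (hB : ∀ i, 0 ≤ B i) (i : ℕ) :
    energy ρ h A B i ≤ energyDissipation ρ h N A B i :=
  le_add_of_nonneg_right <| mul_nonneg (by linarith) (sum_nonneg fun j _ => mul_nonneg (hB j) hh)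

theorem energyDissipation_le_succ (hρ : 0 ≤ ρ) (hc : 0 ≤ c) (hh : 0 ≤ h) (hB : ∀ i, 0 ≤ B i)
    {i : ℕ} (hi : i < N)
    (hstep : A i + ρ * B i * h ≤ (1 + c * h) * (A (i + 1) + ρ / 4 * B (i + 1) * h) + H i) :
    energyDissipation ρ h N A B i
      ≤ (1 + c * h) * energyDissipation ρ h N A B (i + 1) + H i := by
  have htail : 0 ≤ 3 * ρ / 4 * ∑ j ∈ Ico (i + 1) N, B j * h :=
    mul_nonneg (by linarith) (sum_nonneg fun j _ => mul_nonneg (hB j) hh)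
  have hch : 0 ≤ c * h * (3 * ρ / 4 * ∑ j ∈ Ico (i + 1) N, B j * h) :=
    mul_nonneg (mul_nonneg hc hh) htail
  unfold energyDissipation energy
  rw [sum_eq_sum_Ico_succ_bot hi]
  linarith

theorem sum_Ico_pow_mul_le_sum_range_mul_exp (hch : 0 ≤ c * h) (hH : ∀ i, 0 ≤ H i) (m : ℕ) :
    ∑ j ∈ Ico m N, (1 + c * h) ^ j * H j ≤ ∑ j ∈ range N, H j * Real.exp (c * j * h) :=
  calc ∑ j ∈ Ico m N, (1 + c * h) ^ j * H j
      ≤ ∑ j ∈ Ico m N, H j * Real.exp (c * j * h) := sum_le_sum fun j _ => by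
        rw [mul_comm]
        exact mul_le_mul_of_nonneg_left (one_add_mul_pow_le_exp_mul_mul hch j) (hH j)
    _ ≤ ∑ j ∈ range N, H j * Real.exp (c * j * h) := by
        rw [range_eq_Ico]
        exact sum_le_sum_of_subset_of_nonneg (Ico_subset_Ico_left m.zero_le)
          fun j _ _ => mul_nonneg (hH j) (Real.exp_pos _).le

theorem energyDissipation_le_exp_mul (hρ : 0 ≤ ρ) (hc : 0 ≤ c) (hh : 0 ≤ h)
    (hA : ∀ i, 0 ≤ A i) (hB : ∀ i, 0 ≤ B i) (hH : ∀ i, 0 ≤ H i)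
    (hstep : ∀ i < N, A i + ρ * B i * h ≤ (1 + c * h) * (A (i + 1) + ρ / 4 * B (i + 1) * h) + H i)
    {m : ℕ} (hm : m ≤ N) :
    energyDissipation ρ h N A B m ≤ Real.exp (c * N * h) *
      (energy ρ h A B N + ∑ j ∈ range N, H j * Real.exp (c * j * h)) := by
  have hch : 0 ≤ c * h := mul_nonneg hc hh
  have hU : 0 ≤ energyDissipation ρ h N A B m :=
    (energy_nonneg hρ hh (hA m) (hB m)).trans (energy_le_energyDissipation hρ hh hB m)
  have hHsum : 0 ≤ ∑ j ∈ range N, H j * Real.exp (c * j * h) :=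
    sum_nonneg fun j _ => mul_nonneg (hH j) (Real.exp_pos _).le
  have hgronwall := pow_mul_le_pow_mul_add_sum_of_le_mul_succ_add
    (u := energyDissipation ρ h N A B) (g := H) (by linarith) hm
    fun i hi => energyDissipation_le_succ hρ hc hh hB hi (hstep i hi)
  have hUN : energyDissipation ρ h N A B N = energy ρ h A B N := by simp [energyDissipation]
  calc energyDissipation ρ h N A B m
      ≤ (1 + c * h) ^ m * energyDissipation ρ h N A B m :=
        le_mul_of_one_le_left hU (one_le_pow₀ (by linarith))
    _ ≤ (1 + c * h) ^ N * energy ρ h A B N + ∑ j ∈ Ico m N, (1 + c * h) ^ j * H j := by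
        rwa [hUN] at hgronwall
    _ ≤ Real.exp (c * N * h) * energy ρ h A B N + ∑ j ∈ range N, H j * Real.exp (c * j * h) :=
        add_le_add
          (mul_le_mul_of_nonneg_right (one_add_mul_pow_le_exp_mul_mul hch N)
            (energy_nonneg hρ hh (hA N) (hB N)))
          (sum_Ico_pow_mul_le_sum_range_mul_exp hch hH m)
    _ ≤ _ := by
        rw [mul_add]
        exact add_le_add_right (le_mul_of_one_le_left hHsum (Real.one_le_exp (by positivity))) _

end Aggregation

theorem fundamental_lemma_aggregation_general (ρ c T : ℝ) (hρ : 0 < ρ) (hc : 0 < c) :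
    ∃ C : ℝ, 0 < C ∧ ∀ (N : ℕ) (h : ℝ) (A B H : ℕ → ℝ),
      0 < h → (N : ℝ) * h = T →
      (∀ i, 0 ≤ A i) → (∀ i, 0 ≤ B i) → (∀ i, 0 ≤ H i) →
      (∀ i < N, A i + ρ * B i * h ≤ (1 + c*h) * (A (i+1) + (ρ/4) * B (i+1) * h) + H i) →
      ∀ i ≤ N, A i + (3*ρ/4) * ∑ j ∈ Finset.range N, B j * h
        ≤ C * (A N + (ρ/4) * B N * h
               + ∑ j ∈ Finset.range N, H j * Real.exp (c * (j:ℝ) * h)) := by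
  refine ⟨2 * Real.exp (c * T), by positivity, ?_⟩
  intro N h A B H hh hNh hA hB hH hstep i hi
  subst hNh
  have hbound {m : ℕ} (hm : m ≤ N) :=
    energyDissipation_le_exp_mul hρ.le hc.le hh.le hA hB hH hstep hm
  have hAi : A i ≤ energyDissipation ρ h N A B i :=
    (le_add_of_nonneg_right (by have := hB i; positivity)).trans
      (energy_le_energyDissipation hρ.le hh.le hB i)
  have hBsum : 3 * ρ / 4 * ∑ j ∈ range N, B j * h ≤ energyDissipation ρ h N A B 0 := by
    rw [energyDissipation, range_eq_Ico]
    exact le_add_of_nonneg_left (energy_nonneg hρ.le hh.le (hA 0) (hB 0))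
  calc A i + 3 * ρ / 4 * ∑ j ∈ range N, B j * h
      ≤ energyDissipation ρ h N A B i + energyDissipation ρ h N A B 0 := add_le_add hAi hBsum
    _ ≤ 2 * Real.exp (c * N * h) *
          (energy ρ h A B N + ∑ j ∈ range N, H j * Real.exp (c * j * h)) := by
        linarith [hbound hi, hbound N.zero_le]
    _ = _ := by rw [energy, mul_assoc c]

theorem fundamental_lemma_aggregation (ρ c T : ℝ) (hρ : 0 < ρ) (hc : 0 < c) (hT : 0 < T) :
    ∃ C : ℝ, 0 < C ∧ ∀ (N : ℕ) (h : ℝ) (A B H : ℕ → ℝ),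
      0 < h → (N : ℝ) * h = T →
      (∀ i, 0 ≤ A i) → (∀ i, 0 ≤ B i) → (∀ i, 0 ≤ H i) →
      (∀ i < N, A i + ρ * B i * h ≤ (1 + c*h) * (A (i+1) + (ρ/4) * B (i+1) * h) + H i) →
      ∀ i ≤ N, A i + (3*ρ/4) * ∑ j ∈ Finset.range N, B j * h
        ≤ C * (A N + (ρ/4) * B N * h
               + ∑ j ∈ Finset.range N, H j * Real.exp (c * (j:ℝ) * h)) :=
  fundamental_lemma_aggregation_general ρ c T hρ hc
end
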